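/- For any two N×p complex matrices A and B, the supremum norm of the difference of the cumulative distribution functions of the empirical spectral measures of AA* and BB* is at most rank(A−B)/N. -/

import Mathlib

/-!
The quadratic forms of `A Aᴴ` and `B Bᴴ` are `‖Aᴴ v‖²` and `‖Bᴴ v‖²`, so they agree on the kernel
of `(A - B)ᴴ`, a subspace of codimension `rank (A - B)`. A vector in that kernel that has no
component along eigenvectors of `B Bᴴ` with eigenvalue `> x` and none along eigenvectors of `A Aᴴ`
with eigenvalue `≤ x` satisfies `x ‖v‖² ≥ ⟪v, B Bᴴ v⟫ = ⟪v, A Aᴴ v⟫ > x ‖v‖²` unless `v = 0`.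
Counting dimensions, `N ≤ (N - #{λᵢ(B Bᴴ) ≤ x}) + rank (A - B) + #{λᵢ(A Aᴴ) ≤ x}`, and by symmetry
the two eigenvalue counts differ by at most `rank (A - B)` at every `x`.
-/

open Matrix

/-- Empirical spectral CDF of a Hermitian matrix. -/
noncomputable def espCDF {N : ℕ} {A : Matrix (Fin N) (Fin N) ℂ}
    (hA : A.IsHermitian) (x : ℝ) : ℝ :=
  ((Finset.univ.filter fun i => hA.eigenvalues i ≤ x).card : ℝ) / N

open Finset

namespace Matrix.IsHermitian

variable {𝕜 n : Type*} [RCLike 𝕜] [Fintype n] [DecidableEq n] {H : Matrix n n 𝕜}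
  (hH : H.IsHermitian)

theorem eigenvectorBasis_repr_toEuclideanLin (v : EuclideanSpace 𝕜 n) (i : n) :
    hH.eigenvectorBasis.repr (toEuclideanLin H v) i =
      hH.eigenvalues i * hH.eigenvectorBasis.repr v i := by
  simp only [eigenvectorBasis, eigenvalues, eigenvalues₀, OrthonormalBasis.repr_reindex]
  exact (isSymmetric_toEuclideanLin_iff.mpr hH).eigenvectorBasis_apply_self_apply _ _ _

theorem re_inner_toEuclideanLin_self (v : EuclideanSpace 𝕜 n) :
    RCLike.re (inner 𝕜 v (toEuclideanLin H v)) =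
      ∑ i, hH.eigenvalues i * ‖hH.eigenvectorBasis.repr v i‖ ^ 2 := by
  rw [← hH.eigenvectorBasis.repr.inner_map_map, PiLp.inner_apply, map_sum]
  refine sum_congr rfl fun i _ => ?_
  rw [eigenvectorBasis_repr_toEuclideanLin, RCLike.inner_apply, mul_assoc, RCLike.mul_conj]
  norm_cast

theorem norm_sq_eq_sum_eigenvectorBasis_repr (v : EuclideanSpace 𝕜 n) :
    ‖v‖ ^ 2 = ∑ i, ‖hH.eigenvectorBasis.repr v i‖ ^ 2 := by
  rw [← hH.eigenvectorBasis.repr.norm_map, EuclideanSpace.norm_sq_eq]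

theorem re_inner_toEuclideanLin_self_sub_mul_norm_sq (x : ℝ) (v : EuclideanSpace 𝕜 n) :
    RCLike.re (inner 𝕜 v (toEuclideanLin H v)) - x * ‖v‖ ^ 2 =
      ∑ i, (hH.eigenvalues i - x) * ‖hH.eigenvectorBasis.repr v i‖ ^ 2 := by
  rw [re_inner_toEuclideanLin_self hH]
  simp only [norm_sq_eq_sum_eigenvectorBasis_repr hH v, mul_sum, sub_mul, sum_sub_distrib]

theorem re_inner_toEuclideanLin_self_le {x : ℝ} {v : EuclideanSpace 𝕜 n}
    (hv : ∀ i, x < hH.eigenvalues i → hH.eigenvectorBasis.repr v i = 0) :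
    RCLike.re (inner 𝕜 v (toEuclideanLin H v)) ≤ x * ‖v‖ ^ 2 := by
  rw [← sub_nonpos, re_inner_toEuclideanLin_self_sub_mul_norm_sq hH]
  refine sum_nonpos fun i _ => ?_
  by_cases hi : hH.eigenvalues i ≤ x
  · exact mul_nonpos_of_nonpos_of_nonneg (sub_nonpos.mpr hi) (by positivity)
  · simp [hv i (not_le.mp hi)]

theorem eq_zero_of_re_inner_toEuclideanLin_self_le {x : ℝ} {v : EuclideanSpace 𝕜 n}
    (hv : ∀ i, hH.eigenvalues i ≤ x → hH.eigenvectorBasis.repr v i = 0)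
    (hle : RCLike.re (inner 𝕜 v (toEuclideanLin H v)) ≤ x * ‖v‖ ^ 2) : v = 0 := by
  have hterm : ∀ i ∈ univ, 0 ≤ (hH.eigenvalues i - x) * ‖hH.eigenvectorBasis.repr v i‖ ^ 2 := by
    intro i _
    by_cases hi : hH.eigenvalues i ≤ x
    · simp [hv i hi]
    · exact mul_nonneg (sub_nonneg.mpr (not_le.mp hi).le) (by positivity)
  have hsum := (sum_eq_zero_iff_of_nonneg hterm).mp <| le_antisymm
    (by rwa [← re_inner_toEuclideanLin_self_sub_mul_norm_sq, sub_nonpos]) (sum_nonneg hterm)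
  refine hH.eigenvectorBasis.repr.map_eq_zero_iff.mp (PiLp.ext fun i => ?_)
  by_cases hi : hH.eigenvalues i ≤ x
  · exact hv i hi
  · simpa [(sub_pos.mpr (not_le.mp hi)).ne'] using hsum i (mem_univ i)

noncomputable def eigenvectorBasisCoords (P : n → Prop) :
    EuclideanSpace 𝕜 n →ₗ[𝕜] ({i // P i} → 𝕜) :=
  LinearMap.pi fun i => hH.eigenvectorBasis.toBasis.coord i

@[simp]
theorem eigenvectorBasisCoords_apply (P : n → Prop) (v : EuclideanSpace 𝕜 n) (i : {i // P i}) :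
    hH.eigenvectorBasisCoords P v i = hH.eigenvectorBasis.repr v i := by
  simp [eigenvectorBasisCoords]

theorem card_eigenvalues_le_le_card_add_finrank_range {F : Type*} [AddCommGroup F] [Module 𝕜 F]
    {H₁ H₂ : Matrix n n 𝕜} (h₁ : H₁.IsHermitian) (h₂ : H₂.IsHermitian)
    (f : EuclideanSpace 𝕜 n →ₗ[𝕜] F)
    (hf : ∀ v, f v = 0 → RCLike.re (inner 𝕜 v (toEuclideanLin H₁ v)) =
      RCLike.re (inner 𝕜 v (toEuclideanLin H₂ v))) (x : ℝ) :
    #{i | h₂.eigenvalues i ≤ x} ≤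
      #{i | h₁.eigenvalues i ≤ x} + Module.finrank 𝕜 (LinearMap.range f) := by
  let Φ := (h₂.eigenvectorBasisCoords fun i => x < h₂.eigenvalues i).prod
    (f.rangeRestrict.prod (h₁.eigenvectorBasisCoords fun i => h₁.eigenvalues i ≤ x))
  have hΦ : Function.Injective Φ := by
    rw [← LinearMap.ker_eq_bot, LinearMap.ker_eq_bot']
    intro v hv
    simp only [Φ, LinearMap.prod_apply, Function.prod_apply, Prod.mk_eq_zero, funext_iff,
      eigenvectorBasisCoords_apply, Pi.zero_apply, Subtype.forall] at hv
    obtain ⟨h₂v, hfv, h₁v⟩ := hv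
    refine h₁.eq_zero_of_re_inner_toEuclideanLin_self_le h₁v ?_
    rw [hf v (by simpa using congrArg Subtype.val hfv)]
    exact h₂.re_inner_toEuclideanLin_self_le h₂v
  have hdim := LinearMap.finrank_le_finrank_of_injective hΦ
  simp only [Module.finrank_prod, Module.finrank_fintype_fun_eq_card, Fintype.card_subtype,
    finrank_euclideanSpace] at hdim
  have hsplit := card_filter_add_card_filter_not (s := univ) fun i => h₂.eigenvalues i ≤ x
  simp only [card_univ, not_le] at hsplit
  omega

end Matrix.IsHermitian

namespace Matrix

section Rank

variable {R m n : Type*} [CommRing R] [Fintype n]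

theorem rank_neg (M : Matrix m n R) : (-M).rank = M.rank := by
  have : (-M).mulVecLin = -M.mulVecLin := by ext; simp
  rw [rank, this, LinearMap.range_neg, rank]

theorem rank_sub_comm (A B : Matrix m n R) : (A - B).rank = (B - A).rank := by
  rw [← neg_sub, rank_neg]

end Rank

variable {𝕜 m n : Type*} [RCLike 𝕜] [Fintype m] [DecidableEq m] [Fintype n] [DecidableEq n]

theorem re_inner_toEuclideanLin_mul_conjTranspose_self (M : Matrix m n 𝕜)
    (v : EuclideanSpace 𝕜 m) :
    RCLike.re (inner 𝕜 v (toEuclideanLin (M * Mᴴ) v)) = ‖toEuclideanLin Mᴴ v‖ ^ 2 := by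
  rw [toLpLin_mul_same, LinearMap.comp_apply, toEuclideanLin_conjTranspose_eq_adjoint,
    ← LinearMap.adjoint_inner_left, ← toEuclideanLin_conjTranspose_eq_adjoint,
    inner_self_eq_norm_sq]

omit [DecidableEq m] in
theorem finrank_range_toEuclideanLin (M : Matrix m n 𝕜) :
    Module.finrank 𝕜 (LinearMap.range (toEuclideanLin M)) = M.rank :=
  (M.rank_eq_finrank_range_toLin (PiLp.basisFun 2 𝕜 m) (PiLp.basisFun 2 𝕜 n)).symm

open scoped ComplexOrder in
theorem card_eigenvalues_mul_conjTranspose_self_le (A B : Matrix m n 𝕜) (x : ℝ) :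
    #{i | (isHermitian_mul_conjTranspose_self B).eigenvalues i ≤ x} ≤
      #{i | (isHermitian_mul_conjTranspose_self A).eigenvalues i ≤ x} + (A - B).rank := by
  rw [← rank_conjTranspose, ← finrank_range_toEuclideanLin]
  refine IsHermitian.card_eigenvalues_le_le_card_add_finrank_range _ _ _ (fun v hv => ?_) x
  have hv' : toEuclideanLin Aᴴ v = toEuclideanLin Bᴴ v :=
    sub_eq_zero.mp (by simpa only [conjTranspose_sub, map_sub, LinearMap.sub_apply] using hv)
  rw [re_inner_toEuclideanLin_mul_conjTranspose_self,
    re_inner_toEuclideanLin_mul_conjTranspose_self, hv']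

end Matrix

theorem stmt_1_general (N p : ℕ) (A B : Matrix (Fin N) (Fin p) ℂ) :
    (⨆ x : ℝ, |espCDF (Matrix.isHermitian_mul_conjTranspose_self A) x -
      espCDF (Matrix.isHermitian_mul_conjTranspose_self B) x|)
      ≤ ((A - B).rank : ℝ) / N := by
  refine ciSup_le fun x => ?_
  have hBA : (_ : ℝ) ≤ _ := Nat.cast_le.mpr (card_eigenvalues_mul_conjTranspose_self_le A B x)
  have hAB : (_ : ℝ) ≤ _ := Nat.cast_le.mpr (card_eigenvalues_mul_conjTranspose_self_le B A x)
  rw [← rank_sub_comm] at hAB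
  push_cast at hAB hBA
  rw [espCDF, espCDF, div_sub_div_same, abs_div, Nat.abs_cast]
  gcongr
  exact abs_sub_le_iff.mpr ⟨by linarith, by linarith⟩

/-- Rank inequality for CDFs of empirical spectral measures of A Aᴴ and B Bᴴ. -/
theorem stmt_1 (N p : ℕ) (hN : 0 < N) (A B : Matrix (Fin N) (Fin p) ℂ) :
    (⨆ x : ℝ, |espCDF (Matrix.isHermitian_mul_conjTranspose_self A) x -
      espCDF (Matrix.isHermitian_mul_conjTranspose_self B) x|)
      ≤ ((A - B).rank : ℝ) / N :=
  stmt_1_general N p A B
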